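/- Let (a^{αβ}) be a symmetric positive definite real 2×2 matrix, and let λ ≥ 0 and μ > 0 be real numbers. Define the contravariant components of the two-dimensional elasticity tensor of a shell by a^{αβστ} := (4λμ/(λ+2μ)) a^{αβ} a^{στ} + 2μ (a^{ασ} a^{βτ} + a^{ατ} a^{βσ}). Then a^{αβστ} = a^{βαστ} = a^{σταβ} for all indices, and there exists a constant c > 0 such that for every symmetric real 2×2 matrix t = (t_{αβ}): Σ_{α,β,σ,τ=1}^{2} a^{αβστ} t_{στ} t_{αβ} ≥ c Σ_{α,β=1}^{2} t_{αβ}². -/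

import Mathlib

/-! For symmetric `t` the energy splits as
`a^{αβστ} t_{στ} t_{αβ} = (4λμ/(λ+2μ)) (a^{αβ} t_{αβ})² + 4μ a^{ασ} a^{βτ} t_{στ} t_{αβ}`.
The first term is nonnegative, and the second is the quadratic form of the Kronecker product
`a ⊗ a` at `t`, which is positive definite. A positive definite matrix dominates a positive
multiple of the identity, since its spectrum is a compact set of positive reals. -/

open scoped RealInnerProductSpace

noncomputable section

abbrev E2 : Type := EuclideanSpace ℝ (Fin 2)
abbrev E3 : Type := EuclideanSpace ℝ (Fin 3)

/-- Partial derivative `∂_α f` of an `ℝ³`-valued map on `ℝ²`. -/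
def pd (α : Fin 2) (f : E2 → E3) (y : E2) : E3 :=
  fderiv ℝ f y (EuclideanSpace.single α 1)

/-- Partial derivative `∂_α f` of a scalar map on `ℝ²`. -/
def pds (α : Fin 2) (f : E2 → ℝ) (y : E2) : ℝ :=
  fderiv ℝ f y (EuclideanSpace.single α 1)

/-- Cross product in `ℝ³`. -/
def cross3 (u v : E3) : E3 :=
  (WithLp.equiv 2 (Fin 3 → ℝ)).symm
    ![u 1 * v 2 - u 2 * v 1, u 2 * v 0 - u 0 * v 2, u 0 * v 1 - u 1 * v 0]

/-- The unit normal vector `a₃(y) = (a₁ × a₂)/|a₁ × a₂|` of the surface parametrized by `θ`. -/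
def nvec (θ : E2 → E3) (y : E2) : E3 :=
  ‖cross3 (pd 0 θ y) (pd 1 θ y)‖⁻¹ • cross3 (pd 0 θ y) (pd 1 θ y)

open scoped MatrixOrder

namespace Matrix

variable {ι : Type*} [Fintype ι] [DecidableEq ι]

theorem PosDef.exists_pos_mul_dotProduct_self_le [Nonempty ι] {M : Matrix ι ι ℝ}
    (hM : M.PosDef) : ∃ c > 0, ∀ x : ι → ℝ, c * (x ⬝ᵥ x) ≤ x ⬝ᵥ M *ᵥ x := by
  obtain ⟨c, hc, hcM⟩ := (CFC.exists_pos_algebraMap_le_iff hM.isHermitian.isSelfAdjoint).mpr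
    fun _ hx => hM.isStrictlyPositive.spectrum_pos hx
  refine ⟨c, hc, fun x => ?_⟩
  have := (le_iff.mp hcM).dotProduct_mulVec_nonneg x
  rw [Algebra.algebraMap_eq_smul_one, sub_mulVec, smul_mulVec, one_mulVec, dotProduct_sub,
    dotProduct_smul, star_trivial, smul_eq_mul] at this
  linarith

theorem PosDef.exists_pos_mul_sum_sq_le [Nonempty ι] {a : Matrix ι ι ℝ} (ha : a.PosDef) :
    ∃ c > 0, ∀ t : Matrix ι ι ℝ, c * ∑ α, ∑ β, t α β ^ 2 ≤
      ∑ α, ∑ β, ∑ σ, ∑ τ, a α σ * a β τ * t σ τ * t α β := by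
  obtain ⟨c, hc, hcM⟩ := (ha.kronecker ha).exists_pos_mul_dotProduct_self_le
  refine ⟨c, hc, fun t => ?_⟩
  convert hcM (fun p => t p.1 p.2) using 1
  · simp only [dotProduct, Fintype.sum_prod_type, sq]
  · simp only [dotProduct, mulVec, kronecker_apply, Fintype.sum_prod_type, Finset.mul_sum]
    congr! 4
    ring

end Matrix

section ElasticityTensor

variable {ι : Type*}

def elasticityTensor (a : Matrix ι ι ℝ) (lam mu : ℝ) (α β σ τ : ι) : ℝ :=
  (4 * lam * mu / (lam + 2 * mu)) * a α β * a σ τ + 2 * mu * (a α σ * a β τ + a α τ * a β σ)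

variable {a : Matrix ι ι ℝ} {lam mu : ℝ}

theorem elasticityTensor_swap_left (ha : a.IsSymm) (α β σ τ : ι) :
    elasticityTensor a lam mu α β σ τ = elasticityTensor a lam mu β α σ τ := by
  rw [elasticityTensor, elasticityTensor, ha.apply α β]
  ring

theorem elasticityTensor_swap_pairs (ha : a.IsSymm) (α β σ τ : ι) :
    elasticityTensor a lam mu α β σ τ = elasticityTensor a lam mu σ τ α β := by
  rw [elasticityTensor, elasticityTensor, ha.apply α σ, ha.apply β τ, ha.apply β σ, ha.apply α τ]
  ring

theorem sum_elasticityTensor_mul_mul [Fintype ι] {t : Matrix ι ι ℝ} (ht : t.IsSymm) :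
    ∑ α, ∑ β, ∑ σ, ∑ τ, elasticityTensor a lam mu α β σ τ * t σ τ * t α β =
      (4 * lam * mu / (lam + 2 * mu)) * (∑ α, ∑ β, a α β * t α β) ^ 2 +
        4 * mu * ∑ α, ∑ β, ∑ σ, ∑ τ, a α σ * a β τ * t σ τ * t α β := by
  have h_trace : (∑ α, ∑ β, a α β * t α β) ^ 2 =
      ∑ α, ∑ β, ∑ σ, ∑ τ, a α β * a σ τ * t σ τ * t α β := by
    simp only [sq, Finset.sum_mul, Finset.mul_sum]
    congr! 4
    ring
  have h_cross : ∑ α, ∑ β, ∑ σ, ∑ τ, a α τ * a β σ * t σ τ * t α β =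
      ∑ α, ∑ β, ∑ σ, ∑ τ, a α σ * a β τ * t σ τ * t α β := by
    refine Finset.sum_congr rfl fun α _ => Finset.sum_congr rfl fun β _ => ?_
    rw [Finset.sum_comm]
    refine Finset.sum_congr rfl fun σ _ => Finset.sum_congr rfl fun τ _ => ?_
    rw [ht.apply τ σ]
  calc _ = (4 * lam * mu / (lam + 2 * mu)) *
          ∑ α, ∑ β, ∑ σ, ∑ τ, a α β * a σ τ * t σ τ * t α β +
        2 * mu * (∑ α, ∑ β, ∑ σ, ∑ τ, a α σ * a β τ * t σ τ * t α β +
          ∑ α, ∑ β, ∑ σ, ∑ τ, a α τ * a β σ * t σ τ * t α β) := by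
        simp only [elasticityTensor, Finset.mul_sum, ← Finset.sum_add_distrib]
        congr! 4
        ring
    _ = _ := by rw [h_trace, h_cross]; ring

end ElasticityTensor

/-- the contravariant components
`a^{αβστ} = (4λμ/(λ+2μ)) a^{αβ} a^{στ} + 2μ (a^{ασ} a^{βτ} + a^{ατ} a^{βσ})` of the
two-dimensional elasticity tensor of a shell, built from a symmetric positive definite
matrix `(a^{αβ})` and Lamé constants `λ ≥ 0`, `μ > 0`, satisfy the symmetries
`a^{αβστ} = a^{βαστ} = a^{σταβ}` and are uniformly positive definite over symmetric
matrices. -/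
theorem elasticity_tensor_2d_symm_posdef
    (a : Matrix (Fin 2) (Fin 2) ℝ) (ha : a.PosDef)
    (lam mu : ℝ) (hlam : 0 ≤ lam) (hmu : 0 < mu)
    (A : Fin 2 → Fin 2 → Fin 2 → Fin 2 → ℝ)
    (hA : ∀ α β σ τ, A α β σ τ =
      (4 * lam * mu / (lam + 2 * mu)) * a α β * a σ τ +
        2 * mu * (a α σ * a β τ + a α τ * a β σ)) :
    (∀ α β σ τ, A α β σ τ = A β α σ τ ∧ A α β σ τ = A σ τ α β) ∧
    ∃ c : ℝ, 0 < c ∧ ∀ t : Matrix (Fin 2) (Fin 2) ℝ, t.IsSymm →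
      c * ∑ α : Fin 2, ∑ β : Fin 2, (t α β) ^ 2 ≤
        ∑ α : Fin 2, ∑ β : Fin 2, ∑ σ : Fin 2, ∑ τ : Fin 2,
          A α β σ τ * t σ τ * t α β := by
  obtain rfl : A = elasticityTensor a lam mu := by funext α β σ τ; exact hA α β σ τ
  have ha_symm : a.IsSymm := Matrix.isHermitian_iff_isSymm.mp ha.isHermitian
  obtain ⟨c, hc, h_coercive⟩ := ha.exists_pos_mul_sum_sq_le
  refine ⟨fun α β σ τ => ⟨elasticityTensor_swap_left ha_symm α β σ τ,
    elasticityTensor_swap_pairs ha_symm α β σ τ⟩, 4 * mu * c, by positivity, fun t ht => ?_⟩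
  rw [sum_elasticityTensor_mul_mul ht, mul_assoc]
  exact le_add_of_nonneg_of_le (by positivity)
    (mul_le_mul_of_nonneg_left (h_coercive t) (by positivity))
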